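/- Let A, B be Hermitian matrices of sizes n and m respectively with |A|_∞ ≤ 1 and |B|_∞ ≤ 1, and fix i with 1 ≤ i ≤ min(m,n). If μᵢ(A) ≥ 0 and μᵢ(B) ≥ 0, then |μᵢ(A)/n − μᵢ(B)/m| ≤ 6·δ_□(A,B)^{1/2}. -/

import Mathlib

/-!
Blowing up `A` by `t` gives `R * A * Rᴴ` with `Rᴴ * R = t • 1`, and by Courant–Fischer this
multiplies every nonnegative sorted eigenvalue by `t`. Hence, for blow-ups `X`, `Y` of `A`, `B`
to a common size `N`, `N (μᵢ(A)/n - μᵢ(B)/m) = μᵢ(X) - μᵢ(Y)`, which by Weyl's inequality is at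
most the spectral radius `|θ|` of `C = X - PYP⁻¹`. Reading an eigenvector `v` of `C` at its
largest coordinate `k`, `|θ|² |v k| = |(C² v) k| ≤ 2 ∑ₗ |(C v) l|`; splitting sums of complex
numbers into the positive and negative parts of their real and imaginary parts, twice, gives
`∑ₗ |(C v) l| ≤ 16 N² ‖C‖_□ |v k|`. So `(μᵢ(A)/n - μᵢ(B)/m)² ≤ 32 ‖C‖_□` for every blow-up and
every `P`, and `√32 ≤ 6`.
-/

open Matrix Finset

/-- The cut-norm of a complex `M × N` matrix. -/
noncomputable def cutNorm {M N : ℕ} (A : Matrix (Fin M) (Fin N) ℂ) : ℝ :=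
  Finset.univ.sup' Finset.univ_nonempty
    (fun p : Finset (Fin M) × Finset (Fin N) =>
      ‖∑ i ∈ p.1, ∑ j ∈ p.2, A i j‖ / (M * N))

/-- `|A|_∞ = max_{i,j} |a_{ij}|`. -/
noncomputable def supAbs {M N : ℕ} (A : Matrix (Fin M) (Fin N) ℂ) : ℝ :=
  ⨆ i, ⨆ j, ‖A i j‖

/-- `f` rearranged in decreasing order. -/
noncomputable def sortDesc {N : ℕ} (f : Fin N → ℝ) : Fin N → ℝ :=
  fun i => f (Tuple.sort f i.rev)

/-- `δ̂_□(X,Y) = min over permutation matrices `P` of `‖X − P Y P⁻¹‖_□`: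
conjugating by a permutation matrix is relabelling by a permutation. -/
noncomputable def hatDelta {N : ℕ} (X Y : Matrix (Fin N) (Fin N) ℂ) : ℝ :=
  ⨅ σ : Equiv.Perm (Fin N), cutNorm (X - Y.submatrix σ σ)

/-- `A^{(t)} = A ⊗ J_t`, realised as a matrix indexed by `Fin (n * t)`. -/
def blowup {n : ℕ} (A : Matrix (Fin n) (Fin n) ℂ) (t : ℕ) :
    Matrix (Fin (n * t)) (Fin (n * t)) ℂ :=
  Matrix.of fun i j => A (finProdFinEquiv.symm i).1 (finProdFinEquiv.symm j).1

/-- The cut-distance of Hermitian matrices `A` (size `n`) and `B` (size `m`):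
`δ_□(A,B) = inf_{k ≥ 1} δ̂_□(A^{(km)}, B^{(kn)})`. -/
noncomputable def cutDist {n m : ℕ} (A : Matrix (Fin n) (Fin n) ℂ)
    (B : Matrix (Fin m) (Fin m) ℂ) : ℝ :=
  ⨅ k : ℕ, hatDelta (blowup A ((k + 1) * m))
    ((blowup B ((k + 1) * n)).submatrix (finCongr (by ring)) (finCongr (by ring)))

section QuadForm

variable {ι κ : Type*} [Fintype ι] [Fintype κ]

noncomputable def sqNorm (v : ι → ℂ) : ℝ := ∑ k, Complex.normSq (v k)

noncomputable def quadForm (M : Matrix ι ι ℂ) (v : ι → ℂ) : ℝ := (star v ⬝ᵥ (M *ᵥ v)).re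

lemma sqNorm_nonneg (v : ι → ℂ) : 0 ≤ sqNorm v :=
  Finset.sum_nonneg fun _ _ => Complex.normSq_nonneg _

lemma sqNorm_pos {v : ι → ℂ} (hv : v ≠ 0) : 0 < sqNorm v := by
  obtain ⟨k, hk⟩ := Function.ne_iff.1 hv
  exact Finset.sum_pos' (fun _ _ => Complex.normSq_nonneg _)
    ⟨k, Finset.mem_univ k, Complex.normSq_pos.2 hk⟩

lemma sqNorm_eq_re_dotProduct (v : ι → ℂ) : sqNorm v = (star v ⬝ᵥ v).re := by
  simp [sqNorm, dotProduct, Complex.re_sum, Complex.normSq_apply, Complex.mul_re]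

lemma quadForm_sub (X Y : Matrix ι ι ℂ) (v : ι → ℂ) :
    quadForm (X - Y) v = quadForm X v - quadForm Y v := by
  simp [quadForm, sub_mulVec, dotProduct_sub]

lemma quadForm_ofReal_smul_left (r : ℝ) (M : Matrix ι ι ℂ) (v : ι → ℂ) :
    quadForm ((r : ℂ) • M) v = r * quadForm M v := by
  rw [quadForm, quadForm, smul_mulVec, dotProduct_smul, smul_eq_mul, Complex.re_ofReal_mul]

lemma quadForm_ofReal_smul_right (M : Matrix ι ι ℂ) (r : ℝ) (w : ι → ℂ) :
    quadForm M ((r : ℂ) • w) = r ^ 2 * quadForm M w := by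
  rw [quadForm, quadForm, mulVec_smul, star_smul, smul_dotProduct, dotProduct_smul]
  simp [sq, mul_assoc]

lemma quadForm_one [DecidableEq ι] (v : ι → ℂ) : quadForm 1 v = sqNorm v := by
  rw [quadForm, one_mulVec, sqNorm_eq_re_dotProduct]

lemma quadForm_diagonal [DecidableEq ι] (d : ι → ℝ) (w : ι → ℂ) :
    quadForm (diagonal (RCLike.ofReal ∘ d)) w = ∑ i, d i * Complex.normSq (w i) := by
  simp only [quadForm, dotProduct, mulVec_diagonal, Complex.re_sum]
  refine Finset.sum_congr rfl fun i _ => ?_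
  simp [Complex.normSq_apply, Complex.mul_re]
  ring

lemma quadForm_mul_mul_conjTranspose (R : Matrix κ ι ℂ) (A : Matrix ι ι ℂ) (v : κ → ℂ) :
    quadForm (R * A * Rᴴ) v = quadForm A (Rᴴ *ᵥ v) := by
  rw [quadForm, quadForm, ← mulVec_mulVec, ← mulVec_mulVec, dotProduct_mulVec, star_mulVec,
    conjTranspose_conjTranspose]

lemma sqNorm_mulVec_eq_quadForm (R : Matrix κ ι ℂ) (w : ι → ℂ) :
    sqNorm (R *ᵥ w) = quadForm (Rᴴ * R) w := by
  rw [sqNorm_eq_re_dotProduct, star_mulVec, ← dotProduct_mulVec, mulVec_mulVec, quadForm]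

lemma sqNorm_mulVec_of_conjTranspose_mul_self [DecidableEq ι] {R : Matrix κ ι ℂ} {t : ℝ}
    (hR : Rᴴ * R = (t : ℂ) • 1) (w : ι → ℂ) : sqNorm (R *ᵥ w) = t * sqNorm w := by
  rw [sqNorm_mulVec_eq_quadForm, hR, quadForm_ofReal_smul_left, quadForm_one]

lemma sqNorm_conjTranspose_mulVec_le [DecidableEq ι] [DecidableEq κ] {R : Matrix κ ι ℂ} {t : ℝ}
    (hR : Rᴴ * R = (t : ℂ) • 1) (ht : 0 < t) (v : κ → ℂ) :
    sqNorm (Rᴴ *ᵥ v) ≤ t * sqNorm v := by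
  set Q := R * Rᴴ
  have hQ : Q * Q = (t : ℂ) • Q := by
    rw [show Q * Q = R * (Rᴴ * R) * Rᴴ by simp only [Q, Matrix.mul_assoc], hR]
    simp [Q]
  have hQH : (Q - (t : ℂ) • 1)ᴴ = Q - (t : ℂ) • 1 := by
    simp [Q, conjTranspose_sub, conjTranspose_smul]
  -- `0 ≤ ‖(Q - t) v‖²` and `(Q - t)² = t² - t Q` since `Q² = t Q`
  have hsq : (Q - (t : ℂ) • 1)ᴴ * (Q - (t : ℂ) • 1) = ((t ^ 2 : ℝ) : ℂ) • 1 - (t : ℂ) • Q := by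
    rw [hQH, sub_mul, mul_sub, mul_sub, hQ]
    simp only [Matrix.smul_mul, Matrix.mul_smul, Matrix.one_mul, Matrix.mul_one, smul_smul]
    push_cast
    module
  have h := sqNorm_nonneg ((Q - (t : ℂ) • 1) *ᵥ v)
  rw [sqNorm_mulVec_eq_quadForm, hsq, quadForm_sub, quadForm_ofReal_smul_left,
    quadForm_ofReal_smul_left, quadForm_one, show Q = Rᴴᴴ * Rᴴ by rw [conjTranspose_conjTranspose],
    ← sqNorm_mulVec_eq_quadForm] at h
  nlinarith

end QuadForm

section Spectral

variable {N : ℕ} {M : Matrix (Fin N) (Fin N) ℂ}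

lemma sortDesc_antitone (f : Fin N → ℝ) : Antitone (sortDesc f) :=
  fun _ _ hab => Tuple.monotone_sort f (Fin.rev_le_rev.2 hab)

/-- `sortDesc f = f ∘ sortDescPerm f` holds by definition. -/
noncomputable def sortDescPerm (f : Fin N → ℝ) : Equiv.Perm (Fin N) :=
  Fin.revPerm.trans (Tuple.sort f)

noncomputable def eigenCoeff (hM : M.IsHermitian) (j : Fin N) : (Fin N → ℂ) →ₗ[ℂ] ℂ :=
  LinearMap.proj (sortDescPerm hM.eigenvalues j) ∘ₗ
    (star (hM.eigenvectorUnitary : Matrix (Fin N) (Fin N) ℂ)).mulVecLin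

variable (hM : M.IsHermitian)

noncomputable def eigenCoeffsOn (s : Finset (Fin N)) : (Fin N → ℂ) →ₗ[ℂ] (s → ℂ) :=
  LinearMap.pi fun j : s => eigenCoeff hM j

lemma mem_ker_eigenCoeffsOn {s : Finset (Fin N)} {v : Fin N → ℂ} :
    v ∈ LinearMap.ker (eigenCoeffsOn hM s) ↔ ∀ j ∈ s, eigenCoeff hM j v = 0 := by
  simp [eigenCoeffsOn, funext_iff]

lemma quadForm_eq_sum_eigenCoeff (v : Fin N → ℂ) :
    quadForm M v = ∑ j, sortDesc hM.eigenvalues j * Complex.normSq (eigenCoeff hM j v) := by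
  conv_lhs => rw [hM.spectral_theorem, Unitary.conjStarAlgAut_apply, star_eq_conjTranspose,
    quadForm_mul_mul_conjTranspose]
  rw [quadForm_diagonal, ← Equiv.sum_comp (sortDescPerm hM.eigenvalues)]
  rfl

lemma sqNorm_eq_sum_eigenCoeff (v : Fin N → ℂ) :
    sqNorm v = ∑ j, Complex.normSq (eigenCoeff hM j v) := by
  have hU : (star (hM.eigenvectorUnitary : Matrix (Fin N) (Fin N) ℂ))ᴴ *
      star (hM.eigenvectorUnitary : Matrix (Fin N) (Fin N) ℂ) = ((1 : ℝ) : ℂ) • 1 := by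
    simp [← star_eq_conjTranspose, Unitary.mul_star_self_of_mem]
  rw [← one_mul (sqNorm v), ← sqNorm_mulVec_of_conjTranspose_mul_self hU, sqNorm,
    ← Equiv.sum_comp (sortDescPerm hM.eigenvalues)]
  rfl

lemma quadForm_le_of_mem_ker_eigenCoeffsOn_Iio {p : Fin N} {v : Fin N → ℂ}
    (hv : v ∈ LinearMap.ker (eigenCoeffsOn hM (Iio p))) :
    quadForm M v ≤ sortDesc hM.eigenvalues p * sqNorm v := by
  rw [quadForm_eq_sum_eigenCoeff hM, sqNorm_eq_sum_eigenCoeff hM, Finset.mul_sum]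
  refine Finset.sum_le_sum fun j _ => ?_
  rcases lt_or_ge j p with hj | hj
  · simp [(mem_ker_eigenCoeffsOn hM).1 hv j (mem_Iio.2 hj)]
  · exact mul_le_mul_of_nonneg_right (sortDesc_antitone _ hj) (Complex.normSq_nonneg _)

lemma le_quadForm_of_mem_ker_eigenCoeffsOn_Ioi {p : Fin N} {v : Fin N → ℂ}
    (hv : v ∈ LinearMap.ker (eigenCoeffsOn hM (Ioi p))) :
    sortDesc hM.eigenvalues p * sqNorm v ≤ quadForm M v := by
  rw [quadForm_eq_sum_eigenCoeff hM, sqNorm_eq_sum_eigenCoeff hM, Finset.mul_sum]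
  refine Finset.sum_le_sum fun j _ => ?_
  rcases le_or_gt j p with hj | hj
  · exact mul_le_mul_of_nonneg_right (sortDesc_antitone _ hj) (Complex.normSq_nonneg _)
  · simp [(mem_ker_eigenCoeffsOn hM).1 hv j (mem_Ioi.2 hj)]

lemma abs_quadForm_le {c : ℝ} (hc : ∀ i, |hM.eigenvalues i| ≤ c) (v : Fin N → ℂ) :
    |quadForm M v| ≤ c * sqNorm v := by
  rw [quadForm_eq_sum_eigenCoeff hM, sqNorm_eq_sum_eigenCoeff hM, Finset.mul_sum]
  refine (Finset.abs_sum_le_sum_abs _ _).trans (Finset.sum_le_sum fun j _ => ?_)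
  rw [abs_mul, abs_of_nonneg (Complex.normSq_nonneg _)]
  exact mul_le_mul_of_nonneg_right (hc _) (Complex.normSq_nonneg _)

end Spectral

lemma finrank_sub_finrank_le_finrank_ker {K V W : Type*} [DivisionRing K] [AddCommGroup V]
    [Module K V] [AddCommGroup W] [Module K W] [FiniteDimensional K V] [FiniteDimensional K W]
    (f : V →ₗ[K] W) :
    Module.finrank K V - Module.finrank K W ≤ Module.finrank K (LinearMap.ker f) := by
  have := f.finrank_range_add_finrank_ker
  have := (LinearMap.range f).finrank_le
  omega

section CourantFischer

variable {N : ℕ} {M : Matrix (Fin N) (Fin N) ℂ} (hM : M.IsHermitian)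

theorem sortDesc_eigenvalues_le_of_forall_mem_ker {ι : Type*} [Fintype ι]
    (g : (Fin N → ℂ) →ₗ[ℂ] (ι → ℂ)) {p : Fin N} (hg : Fintype.card ι ≤ p) {c : ℝ}
    (h : ∀ v ∈ LinearMap.ker g, quadForm M v ≤ c * sqNorm v) :
    sortDesc hM.eigenvalues p ≤ c := by
  have hker : LinearMap.ker (g.prod (eigenCoeffsOn hM (Ioi p))) ≠ ⊥ := by
    refine LinearMap.ker_ne_bot_of_finrank_lt ?_
    simp only [Module.finrank_prod, Module.finrank_fintype_fun_eq_card, Fintype.card_coe,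
      Fin.card_Ioi, Fintype.card_fin]
    omega
  obtain ⟨v, hv, hv0⟩ := Submodule.exists_mem_ne_zero_of_ne_bot hker
  rw [LinearMap.ker_prod] at hv
  have := le_quadForm_of_mem_ker_eigenCoeffsOn_Ioi hM hv.2
  have := h v hv.1
  have := sqNorm_pos hv0
  nlinarith

theorem le_sortDesc_eigenvalues_of_forall_mem {V : Submodule ℂ (Fin N → ℂ)} {p : Fin N}
    (hV : (p : ℕ) + 1 ≤ Module.finrank ℂ V) {c : ℝ}
    (h : ∀ v ∈ V, c * sqNorm v ≤ quadForm M v) :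
    c ≤ sortDesc hM.eigenvalues p := by
  have hker : LinearMap.ker ((eigenCoeffsOn hM (Iio p)).domRestrict V) ≠ ⊥ := by
    refine LinearMap.ker_ne_bot_of_finrank_lt ?_
    simp only [Module.finrank_fintype_fun_eq_card, Fintype.card_coe, Fin.card_Iio]
    omega
  obtain ⟨⟨v, hvV⟩, hv, hv0⟩ := Submodule.exists_mem_ne_zero_of_ne_bot hker
  have := quadForm_le_of_mem_ker_eigenCoeffsOn_Iio hM (v := v) hv
  have := h v hvV
  have := sqNorm_pos (v := v) (by simpa using hv0)
  nlinarith

end CourantFischer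

section Weyl

variable {N : ℕ} {X Y : Matrix (Fin N) (Fin N) ℂ} (hX : X.IsHermitian) (hY : Y.IsHermitian)

theorem sortDesc_eigenvalues_le_add (p : Fin N) {c : ℝ}
    (h : ∀ v, quadForm X v - quadForm Y v ≤ c * sqNorm v) :
    sortDesc hX.eigenvalues p ≤ sortDesc hY.eigenvalues p + c := by
  refine sortDesc_eigenvalues_le_of_forall_mem_ker hX (eigenCoeffsOn hY (Iio p))
    (by rw [Fintype.card_coe, Fin.card_Iio]) fun v hv => ?_
  have := quadForm_le_of_mem_ker_eigenCoeffsOn_Iio hY hv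
  linarith [h v]

theorem abs_sub_sortDesc_eigenvalues_le (p : Fin N) {c : ℝ}
    (h : ∀ v, |quadForm (X - Y) v| ≤ c * sqNorm v) :
    |sortDesc hX.eigenvalues p - sortDesc hY.eigenvalues p| ≤ c := by
  have h' v := abs_le.1 (quadForm_sub X Y v ▸ h v)
  rw [abs_sub_le_iff]
  constructor
  · linarith [sortDesc_eigenvalues_le_add hX hY p fun v => (h' v).2]
  · linarith [sortDesc_eigenvalues_le_add hY hX p fun v => by linarith [(h' v).1]]

end Weyl

theorem sortDesc_eigenvalues_mul_mul_conjTranspose {n N : ℕ} {A : Matrix (Fin n) (Fin n) ℂ}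
    (hA : A.IsHermitian) {R : Matrix (Fin N) (Fin n) ℂ} {t : ℝ} (ht : 0 < t)
    (hR : Rᴴ * R = (t : ℂ) • 1) (hRA : (R * A * Rᴴ).IsHermitian) {p : Fin n} {p' : Fin N}
    (hpp : (p' : ℕ) = p) (hp : 0 ≤ sortDesc hA.eigenvalues p) :
    sortDesc hRA.eigenvalues p' = t * sortDesc hA.eigenvalues p := by
  apply le_antisymm
  · refine sortDesc_eigenvalues_le_of_forall_mem_ker hRA
      (eigenCoeffsOn hA (Iio p) ∘ₗ Rᴴ.mulVecLin) (by rw [Fintype.card_coe, Fin.card_Iio, hpp])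
      fun v hv => ?_
    rw [quadForm_mul_mul_conjTranspose]
    have h1 := quadForm_le_of_mem_ker_eigenCoeffsOn_Iio hA (v := Rᴴ *ᵥ v) hv
    have h2 := mul_le_mul_of_nonneg_left (sqNorm_conjTranspose_mulVec_le hR ht v) hp
    linarith
  · have hinj : Function.Injective R.mulVecLin := fun w₁ w₂ h => by
      have h' := congrArg (Rᴴ *ᵥ ·) h
      simp only [mulVecLin_apply, mulVec_mulVec, hR, smul_mulVec, one_mulVec] at h'
      exact smul_right_injective _ (by exact_mod_cast ht.ne') h'
    refine le_sortDesc_eigenvalues_of_forall_mem hRA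
      (V := (LinearMap.ker (eigenCoeffsOn hA (Ioi p))).map R.mulVecLin) ?_ ?_
    · rw [← LinearEquiv.finrank_eq (Submodule.equivMapOfInjective _ hinj _), hpp]
      have := finrank_sub_finrank_le_finrank_ker (eigenCoeffsOn hA (Ioi p))
      simp only [Module.finrank_fintype_fun_eq_card, Fintype.card_coe, Fin.card_Ioi,
        Fintype.card_fin] at this
      omega
    · rintro _ ⟨w, hw, rfl⟩
      rw [mulVecLin_apply, quadForm_mul_mul_conjTranspose, mulVec_mulVec, hR, smul_mulVec,
        one_mulVec, quadForm_ofReal_smul_right, sqNorm_mulVec_of_conjTranspose_mul_self hR]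
      have := le_quadForm_of_mem_ker_eigenCoeffsOn_Ioi hA hw
      have ht2 : 0 ≤ t ^ 2 := sq_nonneg t
      nlinarith

section Submatrix

variable {ι κ : Type*} [DecidableEq ι]

lemma submatrix_eq_mul_mul_conjTranspose [Fintype ι] (A : Matrix ι ι ℂ) (f : κ → ι) :
    A.submatrix f f = (1 : Matrix ι ι ℂ).submatrix f id * A *
      ((1 : Matrix ι ι ℂ).submatrix f id)ᴴ := by
  ext i j
  simp [mul_apply, one_apply]

lemma conjTranspose_mul_self_one_submatrix [Fintype κ] (f : κ → ι) {t : ℕ}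
    (hf : ∀ a, Fintype.card {i // f i = a} = t) :
    ((1 : Matrix ι ι ℂ).submatrix f id)ᴴ * (1 : Matrix ι ι ℂ).submatrix f id =
      ((t : ℝ) : ℂ) • 1 := by
  ext a b
  simp [mul_apply, one_apply]
  split_ifs with hab
  · subst hab
    rw [← hf a, Fintype.card_subtype, Finset.natCast_card_filter]
    exact Finset.sum_congr rfl fun x _ => by split_ifs <;> simp_all
  · exact Finset.sum_eq_zero fun x _ => by split_ifs <;> simp_all

end Submatrix

theorem sortDesc_eigenvalues_submatrix {n N : ℕ} {A : Matrix (Fin n) (Fin n) ℂ}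
    (hA : A.IsHermitian) {f : Fin N → Fin n} {t : ℕ} (ht : 0 < t)
    (hf : ∀ a, Fintype.card {i // f i = a} = t) (hAf : (A.submatrix f f).IsHermitian)
    {p : Fin n} {p' : Fin N} (hpp : (p' : ℕ) = p) (hp : 0 ≤ sortDesc hA.eigenvalues p) :
    sortDesc hAf.eigenvalues p' = t * sortDesc hA.eigenvalues p := by
  have hRA := submatrix_eq_mul_mul_conjTranspose A f ▸ hAf
  convert sortDesc_eigenvalues_mul_mul_conjTranspose hA (by exact_mod_cast ht)
    (conjTranspose_mul_self_one_submatrix f hf) hRA hpp hp using 3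
  exact submatrix_eq_mul_mul_conjTranspose A f

lemma card_fiber_fst_finProdFinEquiv_symm {n t : ℕ} (a : Fin n) :
    Fintype.card {i : Fin (n * t) // (finProdFinEquiv.symm i).1 = a} = t := by
  rw [Fintype.card_congr ((finProdFinEquiv.symm.subtypeEquiv (q := fun x => x.1 = a)
    fun _ => Iff.rfl).trans (Equiv.prodSubtypeFstEquivSubtypeProd (p := (· = a))))]
  simp

section CutNorm

variable {ι κ : Type*} [Fintype ι] [Fintype κ]

lemma sum_abs_le_two_mul_of_abs_sum_le (z : ι → ℝ) {b : ℝ}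
    (h : ∀ S : Finset ι, |∑ k ∈ S, z k| ≤ b) : ∑ k, |z k| ≤ 2 * b := by
  classical
  set P := univ.filter fun k => 0 ≤ z k
  set Q := univ.filter fun k => ¬ 0 ≤ z k
  have hP : ∑ k ∈ P, |z k| = ∑ k ∈ P, z k :=
    Finset.sum_congr rfl fun k hk => abs_of_nonneg (Finset.mem_filter.1 hk).2
  have hQ : ∑ k ∈ Q, |z k| = -∑ k ∈ Q, z k := by
    rw [← Finset.sum_neg_distrib]
    exact Finset.sum_congr rfl fun k hk => abs_of_neg (not_le.1 (Finset.mem_filter.1 hk).2)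
  rw [← Finset.sum_filter_add_sum_filter_not univ (fun k => 0 ≤ z k), hP, hQ]
  linarith [le_abs_self (∑ k ∈ P, z k), h P, neg_le_abs (∑ k ∈ Q, z k), h Q]

lemma sum_norm_le_four_mul_of_norm_sum_le (z : ι → ℂ) {b : ℝ}
    (h : ∀ S : Finset ι, ‖∑ k ∈ S, z k‖ ≤ b) : ∑ k, ‖z k‖ ≤ 4 * b := by
  have hre := sum_abs_le_two_mul_of_abs_sum_le (fun k => (z k).re) fun S =>
    (Complex.re_sum S z ▸ Complex.abs_re_le_norm _).trans (h S)
  have him := sum_abs_le_two_mul_of_abs_sum_le (fun k => (z k).im) fun S =>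
    (Complex.im_sum S z ▸ Complex.abs_im_le_norm _).trans (h S)
  calc ∑ k, ‖z k‖ ≤ ∑ k, (|(z k).re| + |(z k).im|) :=
        Finset.sum_le_sum fun k _ => Complex.norm_le_abs_re_add_abs_im (z k)
    _ ≤ 4 * b := by rw [Finset.sum_add_distrib]; linarith

lemma sum_norm_mulVec_le (C : Matrix ι κ ℂ) {b : ℝ}
    (hC : ∀ (S : Finset ι) (T : Finset κ), ‖∑ k ∈ S, ∑ l ∈ T, C k l‖ ≤ b)
    {v : κ → ℂ} {s : ℝ} (hs : 0 ≤ s) (hv : ∀ l, ‖v l‖ ≤ s) :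
    ∑ k, ‖(C *ᵥ v) k‖ ≤ 16 * b * s := by
  refine (sum_norm_le_four_mul_of_norm_sum_le _ fun S => ?_).trans_eq
    (by ring : 4 * (4 * b * s) = _)
  have hcols := sum_norm_le_four_mul_of_norm_sum_le (fun l => ∑ k ∈ S, C k l) fun T => by
    rw [Finset.sum_comm]; exact hC S T
  calc ‖∑ k ∈ S, (C *ᵥ v) k‖ = ‖∑ l, (∑ k ∈ S, C k l) * v l‖ := by
        simp only [mulVec, dotProduct, Finset.sum_mul]; rw [Finset.sum_comm]
    _ ≤ ∑ l, ‖∑ k ∈ S, C k l‖ * s :=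
        (norm_sum_le _ _).trans (Finset.sum_le_sum fun l _ => by
          rw [norm_mul]; exact mul_le_mul_of_nonneg_left (hv l) (norm_nonneg _))
    _ ≤ 4 * b * s := by rw [← Finset.sum_mul]; exact mul_le_mul_of_nonneg_right hcols hs

lemma norm_sq_le_of_mulVec_eq_smul {C : Matrix ι ι ℂ} {θ : ℂ} {v : ι → ℂ} (hv : v ≠ 0)
    (hCv : C *ᵥ v = θ • v) {a b : ℝ} (hent : ∀ k l, ‖C k l‖ ≤ a)
    (hrect : ∀ S T : Finset ι, ‖∑ k ∈ S, ∑ l ∈ T, C k l‖ ≤ b) :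
    ‖θ‖ ^ 2 ≤ 16 * a * b := by
  obtain ⟨k, hk⟩ := Function.ne_iff.1 hv
  have : Nonempty ι := ⟨k⟩
  obtain ⟨k₀, hk₀⟩ := Finite.exists_max fun k => ‖v k‖
  have hvk₀ : 0 < ‖v k₀‖ := (norm_pos_iff.2 hk).trans_le (hk₀ k)
  have ha : 0 ≤ a := (norm_nonneg _).trans (hent k₀ k₀)
  have hCCv : C *ᵥ (C *ᵥ v) = (θ ^ 2) • v := by
    rw [hCv, mulVec_smul, hCv, smul_smul, sq]
  have key : ‖θ‖ ^ 2 * ‖v k₀‖ ≤ a * (16 * b * ‖v k₀‖) :=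
    calc ‖θ‖ ^ 2 * ‖v k₀‖ = ‖(C *ᵥ (C *ᵥ v)) k₀‖ := by
          rw [hCCv, Pi.smul_apply, smul_eq_mul, norm_mul, norm_pow]
      _ ≤ ∑ l, a * ‖(C *ᵥ v) l‖ :=
          (norm_sum_le _ _).trans (Finset.sum_le_sum fun l _ => by
            rw [norm_mul]; exact mul_le_mul_of_nonneg_right (hent k₀ l) (norm_nonneg _))
      _ ≤ a * (16 * b * ‖v k₀‖) := by
          rw [← Finset.mul_sum]
          exact mul_le_mul_of_nonneg_left (sum_norm_mulVec_le C hrect (norm_nonneg _) hk₀) ha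
  nlinarith

end CutNorm

theorem sq_sub_sortDesc_eigenvalues_le {N : ℕ} {X Y : Matrix (Fin N) (Fin N) ℂ}
    (hX : X.IsHermitian) (hY : Y.IsHermitian) (p : Fin N) {a b : ℝ}
    (hent : ∀ k l, ‖(X - Y) k l‖ ≤ a)
    (hrect : ∀ S T : Finset (Fin N), ‖∑ k ∈ S, ∑ l ∈ T, (X - Y) k l‖ ≤ b) :
    (sortDesc hX.eigenvalues p - sortDesc hY.eigenvalues p) ^ 2 ≤ 16 * a * b := by
  have hC := hX.sub hY
  have : Nonempty (Fin N) := ⟨p⟩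
  obtain ⟨i, hi⟩ := Finite.exists_max fun i => |hC.eigenvalues i|
  have hweyl := abs_sub_sortDesc_eigenvalues_le hX hY p (abs_quadForm_le hC hi)
  have hvec : ⇑(hC.eigenvectorBasis i) ≠ 0 := by
    simpa using hC.eigenvectorBasis.orthonormal.ne_zero i
  have hθ := norm_sq_le_of_mulVec_eq_smul (θ := hC.eigenvalues i) hvec
    (by rw [hC.mulVec_eigenvectorBasis i]; ext; simp [Complex.real_smul]) hent hrect
  rw [Complex.norm_real, Real.norm_eq_abs] at hθ
  calc _ = |sortDesc hX.eigenvalues p - sortDesc hY.eigenvalues p| ^ 2 := (sq_abs _).symm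
    _ ≤ |hC.eigenvalues i| ^ 2 := pow_le_pow_left₀ (abs_nonneg _) hweyl 2
    _ ≤ 16 * a * b := hθ

lemma norm_le_supAbs {M N : ℕ} (A : Matrix (Fin M) (Fin N) ℂ) (i : Fin M) (j : Fin N) :
    ‖A i j‖ ≤ supAbs A :=
  (le_ciSup (Set.finite_range _).bddAbove j).trans
    (le_ciSup (f := fun i => ⨆ j, ‖A i j‖) (Set.finite_range _).bddAbove i)

lemma norm_sum_sum_le_cutNorm {M N : ℕ} (A : Matrix (Fin M) (Fin N) ℂ) (hMN : 0 < M * N)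
    (S : Finset (Fin M)) (T : Finset (Fin N)) :
    ‖∑ i ∈ S, ∑ j ∈ T, A i j‖ ≤ cutNorm A * (M * N) := by
  rw [← div_le_iff₀ (by exact_mod_cast hMN)]
  exact Finset.le_sup' (fun p : Finset (Fin M) × Finset (Fin N) =>
    ‖∑ i ∈ p.1, ∑ j ∈ p.2, A i j‖ / (M * N)) (Finset.mem_univ (S, T))

theorem sq_sub_le_hatDelta_blowup {n m a b : ℕ} {A : Matrix (Fin n) (Fin n) ℂ}
    {B : Matrix (Fin m) (Fin m) ℂ} (hA : A.IsHermitian) (hB : B.IsHermitian)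
    (hA1 : supAbs A ≤ 1) (hB1 : supAbs B ≤ 1) (ha : 0 < a) (hb : 0 < b) (h : n * a = m * b)
    {p : Fin n} {q : Fin m} (hpq : (p : ℕ) = q) (hμA : 0 ≤ sortDesc hA.eigenvalues p)
    (hμB : 0 ≤ sortDesc hB.eigenvalues q) :
    (sortDesc hA.eigenvalues p / n - sortDesc hB.eigenvalues q / m) ^ 2 ≤
      32 * hatDelta (blowup A a) ((blowup B b).submatrix (finCongr h) (finCongr h)) := by
  have hN : 0 < n * a := Nat.mul_pos p.pos ha
  suffices hσ : ∀ σ : Equiv.Perm (Fin (n * a)),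
      (sortDesc hA.eigenvalues p / n - sortDesc hB.eigenvalues q / m) ^ 2 ≤
        32 * cutNorm (blowup A a -
          ((blowup B b).submatrix (finCongr h) (finCongr h)).submatrix σ σ) by
    have := le_ciInf fun σ => (div_le_iff₀' (by norm_num : (0 : ℝ) < 32)).2 (hσ σ)
    rw [hatDelta]
    linarith
  intro σ
  set f : Fin (n * a) → Fin n := fun i => (finProdFinEquiv.symm i).1
  set g : Fin (n * a) → Fin m := fun i => (finProdFinEquiv.symm (finCongr h (σ i))).1
  change _ ≤ 32 * cutNorm (A.submatrix f f - B.submatrix g g)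
  have hX : (A.submatrix f f).IsHermitian := hA.submatrix f
  have hY : (B.submatrix g g).IsHermitian := hB.submatrix g
  set p' : Fin (n * a) := ⟨p, p.2.trans_le (Nat.le_mul_of_pos_right n ha)⟩
  have hXp : sortDesc hX.eigenvalues p' = a * sortDesc hA.eigenvalues p :=
    sortDesc_eigenvalues_submatrix hA ha card_fiber_fst_finProdFinEquiv_symm hX rfl hμA
  have hYp : sortDesc hY.eigenvalues p' = b * sortDesc hB.eigenvalues q := by
    refine sortDesc_eigenvalues_submatrix hB hb (fun c => ?_) hY hpq hμB
    rw [← card_fiber_fst_finProdFinEquiv_symm (t := b) c]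
    exact Fintype.card_congr ((σ.trans (finCongr h)).subtypeEquiv fun _ => Iff.rfl)
  have hent : ∀ k l, ‖(A.submatrix f f - B.submatrix g g) k l‖ ≤ 2 := fun k l =>
    (norm_sub_le _ _).trans (by
      linarith [norm_le_supAbs A (f k) (f l), norm_le_supAbs B (g k) (g l)] :
        ‖A (f k) (f l)‖ + ‖B (g k) (g l)‖ ≤ 2)
  have hdiff := sq_sub_sortDesc_eigenvalues_le hX hY p' hent
    (norm_sum_sum_le_cutNorm _ (Nat.mul_pos hN hN))
  have hsplit : sortDesc hX.eigenvalues p' - sortDesc hY.eigenvalues p' =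
      ((n * a : ℕ) : ℝ) * (sortDesc hA.eigenvalues p / n - sortDesc hB.eigenvalues q / m) := by
    have hn : (n : ℝ) ≠ 0 := by have := p.pos; positivity
    have hm : (m : ℝ) ≠ 0 := by have := q.pos; positivity
    have hcast : (n : ℝ) * a = m * b := by exact_mod_cast h
    rw [hXp, hYp]
    push_cast
    field_simp
    linear_combination sortDesc hB.eigenvalues q * hcast
  rw [hsplit, mul_pow] at hdiff
  have hN2 : (0 : ℝ) < ((n * a : ℕ) : ℝ) ^ 2 := by positivity
  nlinarith

/-- Let `A`, `B` be Hermitian matrices of sizes `n`, `m` with `|A|_∞ ≤ 1`,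
`|B|_∞ ≤ 1`, and let `1 ≤ i ≤ min(m,n)`.  If `μᵢ(A) ≥ 0` and `μᵢ(B) ≥ 0`
(eigenvalues in decreasing order), then
`|μᵢ(A)/n − μᵢ(B)/m| ≤ 6 δ_□(A,B)^{1/2}`. -/
theorem eigenvalue_cutDist_bound {n m : ℕ} (A : Matrix (Fin n) (Fin n) ℂ)
    (B : Matrix (Fin m) (Fin m) ℂ) (hA : A.IsHermitian) (hB : B.IsHermitian)
    (hA1 : supAbs A ≤ 1) (hB1 : supAbs B ≤ 1)
    (i : ℕ) (hi : 1 ≤ i) (hin : i ≤ n) (him : i ≤ m)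
    (hμA : 0 ≤ sortDesc hA.eigenvalues ⟨i - 1, by omega⟩)
    (hμB : 0 ≤ sortDesc hB.eigenvalues ⟨i - 1, by omega⟩) :
    |sortDesc hA.eigenvalues ⟨i - 1, by omega⟩ / n -
      sortDesc hB.eigenvalues ⟨i - 1, by omega⟩ / m| ≤
      6 * Real.sqrt (cutDist A B) := by
  have hn : 0 < n := by omega
  have hm : 0 < m := by omega
  set D := sortDesc hA.eigenvalues ⟨i - 1, by omega⟩ / n -
    sortDesc hB.eigenvalues ⟨i - 1, by omega⟩ / m
  have hD : D ^ 2 / 32 ≤ cutDist A B := le_ciInf fun k => by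
    have := sq_sub_le_hatDelta_blowup hA hB hA1 hB1 (by positivity) (by positivity)
      (by ring : n * ((k + 1) * m) = m * ((k + 1) * n)) rfl hμA hμB
    linarith
  calc |D| = √(D ^ 2) := (Real.sqrt_sq_eq_abs D).symm
    _ ≤ √(6 ^ 2 * cutDist A B) := Real.sqrt_le_sqrt (by linarith [sq_nonneg D])
    _ = 6 * √(cutDist A B) := by rw [Real.sqrt_mul (by positivity), Real.sqrt_sq (by norm_num)]
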